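/- Suppose t̃_k ∈ Ω for all k ∈ {1,…,m}, and suppose δ > 0 is such that ‖Sv‖₂ ≥ ‖v‖₂/δ for all v ∈ ℂ^N. Let b = f̃ + d ∈ ℂ^m and let f♯ be any minimizer of ‖Sh − b‖₂ over h ∈ ℂ^N. Then ‖f − f♯‖₂ ≤ 2δ‖d‖₂ + 2δ√m Σ_{|ℓ|>Ñ} |c_ℓ|. -/

import Mathlib

open scoped BigOperators
open MeasureTheory Matrix

noncomputable section

/-- The complex exponential `e(x) = exp(2πix)`. -/
def ce (x : ℝ) : ℂ := Complex.exp (2 * Real.pi * Complex.I * x)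

/-- Half-bandwidth `Ñ = (N-1)/2`. -/
def Nt (N : ℕ) : ℤ := ((N : ℤ) - 1) / 2

/-- Uniform grid point `t_p = (p-1)/N - 1/2` (zero-based index). -/
def tg (N : ℕ) (p : Fin N) : ℝ := (p : ℝ) / N - 1 / 2

/-- Dirichlet interpolation matrix `S ∈ ℂ^{m×N}`. -/
def dirS (N m : ℕ) (tt : Fin m → ℝ) : Matrix (Fin m) (Fin N) ℂ :=
  fun k p => (N : ℂ)⁻¹ * ∑ u ∈ Finset.Icc (-(Nt N)) (Nt N), ce (u * (tg N p - tt k))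

/-- Centered DFT matrix `F ∈ ℂ^{N×N}`. -/
def dftF (N : ℕ) : Matrix (Fin N) (Fin N) ℂ :=
  fun p u => ((Real.sqrt N : ℂ))⁻¹ * ce (-(tg N p) * ((u : ℤ) - Nt N))

/-- DFT-incoherence parameter of `Ψ`. -/
def dftIncoh (N n : ℕ) (Ψ : Matrix (Fin N) (Fin n) ℂ) : ℝ :=
  ⨆ ℓ : Fin n, ∑ k : Fin N, ‖((dftF N)ᴴ * Ψ) k ℓ‖

/-- Euclidean norm on `ℂ^n`. -/
def norm2 {n : ℕ} (v : Fin n → ℂ) : ℝ := Real.sqrt (∑ i, ‖v i‖ ^ 2)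

/-- `ℓ₁` norm on `ℂ^n`. -/
def norm1 {n : ℕ} (v : Fin n → ℂ) : ℝ := ∑ i, ‖v i‖

/-- `v` has at most `s` nonzero entries. -/
def Sparse {n : ℕ} (s : ℕ) (v : Fin n → ℂ) : Prop :=
  (Finset.univ.filter fun i => v i ≠ 0).card ≤ s

/-- Error of the best `s`-sparse approximation of `g` in `ℓ₁`. -/
def sperr {n : ℕ} (s : ℕ) (g : Fin n → ℂ) : ℝ :=
  sInf {r : ℝ | ∃ h : Fin n → ℂ, Sparse s h ∧ r = norm1 (fun i => h i - g i)}

/-- The 1-periodic signal with Fourier coefficients `c`. -/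
def fcont (c : ℤ → ℂ) (x : ℝ) : ℂ := ∑' ℓ : ℤ, c ℓ * ce (ℓ * x)

/-- Tail `∑_{|ℓ|>Ñ} |c_ℓ|` of the Fourier coefficients. -/
def tailSum (N : ℕ) (c : ℤ → ℂ) : ℝ :=
  ∑' ℓ : ℤ, if Nt N < |ℓ| then ‖c ℓ‖ else 0

/-- The distribution `𝒟` satisfies the deviation model with parameter `θ`. -/
def DevModel (N m : ℕ) (𝒟 : Measure ℝ) (θ : ℝ) : Prop :=
  ∀ j : ℤ, j ≠ 0 → (|j| : ℝ) ≤ 2 * ((N : ℝ) - 1) / m →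
    (2 * N / m) * ‖∫ x, ce (((j * m : ℤ) : ℝ) * x) ∂𝒟‖ ≤ θ

/-- The random nonuniform sample points `t̃_k = (k-1)/m - 1/2 + Δ_k`. -/
def samplePts {Ω : Type*} (m : ℕ) (Δ : Fin m → Ω → ℝ) (ω : Ω) : Fin m → ℝ :=
  fun k => (k : ℝ) / m - 1 / 2 + Δ k ω

/-!
Let `g` be the grid values of the low-pass part `∑_{|ℓ| ≤ Ñ} c_ℓ e(ℓ x)` of `𝐟`. The Dirichlet
matrix reproduces trigonometric polynomials of degree at most `Ñ` exactly, so `S g` is the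
low-pass part at the sample points; and by aliasing, `S` sends the grid values of any `e(ℓ ·)` to
a vector whose entries have modulus one. Hence `S f` and `f̃` are both entrywise within
`T = ∑_{|ℓ|>Ñ} |c_ℓ|` of `S g`. Since `S f♯` is the orthogonal projection of `b` onto the range
of `S`, `‖S (g - f♯)‖ ≤ ‖S g - b‖`, and the lower bound `‖v‖ ≤ δ ‖S v‖` turns these into
`‖f - g‖ ≤ δ √m T` and `‖g - f♯‖ ≤ δ (√m T + ‖d‖)`.
-/

section

open Finset

lemma ce_add (x y : ℝ) : ce (x + y) = ce x * ce y := by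
  simp only [ce, ← Complex.exp_add]
  congr 1
  push_cast
  ring

lemma norm_ce (x : ℝ) : ‖ce x‖ = 1 := by
  simp [ce, Complex.norm_exp]

lemma ce_intCast (n : ℤ) : ce n = 1 := by
  rw [ce, ← Complex.exp_int_mul_two_pi_mul_I n]
  congr 1
  push_cast
  ring

lemma ce_zero : ce 0 = 1 := by
  simpa using ce_intCast 0

lemma ce_natCast_mul (n : ℕ) (x : ℝ) : ce (n * x) = ce x ^ n := by
  rw [ce, ce, ← Complex.exp_nat_mul]
  congr 1
  push_cast
  ring

lemma exists_intCast_eq_of_ce_eq_one {x : ℝ} (h : ce x = 1) : ∃ n : ℤ, x = n := by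
  obtain ⟨n, hn⟩ := Complex.exp_eq_one_iff.1 h
  refine ⟨n, ?_⟩
  have h2pi : (2 * Real.pi * Complex.I : ℂ) ≠ 0 := by simp [Real.pi_ne_zero]
  have hmul : (x : ℂ) * (2 * Real.pi * Complex.I) = n * (2 * Real.pi * Complex.I) := by
    rw [← hn]
    ring
  exact_mod_cast mul_right_cancel₀ h2pi hmul

lemma sum_ce_mul_tg_eq_zero {N : ℕ} (hN : 0 < N) {a : ℤ} (ha : ¬ (N : ℤ) ∣ a) :
    ∑ p : Fin N, ce (a * tg N p) = 0 := by
  have hN0 : (N : ℝ) ≠ 0 := by positivity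
  have hterm (p : Fin N) : ce (a * tg N p) = ce (a / N) ^ (p : ℕ) * ce (-a / 2) := by
    rw [← ce_natCast_mul, ← ce_add, tg]
    congr 1
    field_simp
    ring
  have hroot : ce (a / N) ^ N = 1 := by
    rw [← ce_natCast_mul, mul_div_cancel₀ _ hN0, ce_intCast]
  have hne : ce (a / N) ≠ 1 := fun h => by
    obtain ⟨n, hn⟩ := exists_intCast_eq_of_ce_eq_one h
    exact ha ⟨n, by rw [mul_comm]; exact_mod_cast (div_eq_iff hN0).1 hn⟩
  simp_rw [hterm, ← Finset.sum_mul, Fin.sum_univ_eq_sum_range (fun i => ce (a / N) ^ i),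
    geom_sum_eq hne, hroot, sub_self, zero_div, zero_mul]

lemma two_mul_Nt_add_one {N : ℕ} (hN : Odd N) : 2 * Nt N + 1 = N := by
  obtain ⟨r, rfl⟩ := hN
  rw [Nt]
  push_cast
  omega

variable {N m : ℕ} {tt : Fin m → ℝ}

lemma dirS_mulVec_ce_of_mem (hN : Odd N) {ℓ : ℤ} (hℓ : ℓ ∈ Icc (-Nt N) (Nt N)) (k : Fin m) :
    (dirS N m tt *ᵥ fun p => ce (ℓ * tg N p)) k = ce (ℓ * tt k) := by
  have hNt := two_mul_Nt_add_one hN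
  have hexpand : (dirS N m tt *ᵥ fun p => ce (ℓ * tg N p)) k =
      (N : ℂ)⁻¹ * ∑ u ∈ Icc (-Nt N) (Nt N),
        ce (-u * tt k) * ∑ p : Fin N, ce ((u + ℓ : ℤ) * tg N p) := by
    simp only [mulVec, dotProduct, dirS, Finset.mul_sum, Finset.sum_mul]
    rw [Finset.sum_comm]
    refine Finset.sum_congr rfl fun u _ => Finset.sum_congr rfl fun p _ => ?_
    rw [mul_assoc, ← ce_add, ← ce_add]
    congr 2
    push_cast
    ring
  have hvanish : ∀ u ∈ Icc (-Nt N) (Nt N), u ≠ -ℓ →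
      ce (-u * tt k) * ∑ p : Fin N, ce ((u + ℓ : ℤ) * tg N p) = 0 := by
    intro u hu hne
    rw [Finset.mem_Icc] at hu hℓ
    rw [sum_ce_mul_tg_eq_zero hN.pos fun hdvd => hne ?_, mul_zero]
    have := Int.eq_zero_of_dvd_of_natAbs_lt_natAbs hdvd (by omega)
    omega
  rw [hexpand, Finset.sum_eq_single_of_mem (-ℓ) (by rw [Finset.mem_Icc] at hℓ ⊢; omega) hvanish]
  have hN0 : (N : ℂ) ≠ 0 := by exact_mod_cast hN.pos.ne'
  simp [field, ce_zero]

lemma exists_mem_Icc_add_mul (hN : Odd N) (ℓ : ℤ) :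
    ∃ ℓ' ∈ Icc (-Nt N) (Nt N), ∃ j : ℤ, ℓ = ℓ' + j * N := by
  have hNt := two_mul_Nt_add_one hN
  refine ⟨(ℓ + Nt N) % N - Nt N, ?_, (ℓ + Nt N) / N, ?_⟩
  · have := Int.emod_nonneg (ℓ + Nt N) (b := N) (by omega)
    have := Int.emod_lt_of_pos (ℓ + Nt N) (b := N) (by omega)
    rw [Finset.mem_Icc]
    omega
  · have := Int.emod_add_mul_ediv (ℓ + Nt N) N
    linarith

lemma ce_mul_tg_add_mul (hN : 0 < N) (ℓ j : ℤ) (p : Fin N) :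
    ce ((ℓ + j * N : ℤ) * tg N p) = ce (-(j * N / 2)) * ce (ℓ * tg N p) := by
  have hN0 : (N : ℝ) ≠ 0 := by positivity
  have hsplit : ((ℓ + j * N : ℤ) : ℝ) * tg N p =
      ((j * p : ℤ) : ℝ) + (-(j * N / 2) + ℓ * tg N p) := by
    rw [tg]
    push_cast
    field_simp
    ring
  rw [hsplit, ce_add, ce_add, ce_intCast, one_mul]

lemma norm_dirS_mulVec_ce (hN : Odd N) (ℓ : ℤ) (k : Fin m) :
    ‖(dirS N m tt *ᵥ fun p => ce (ℓ * tg N p)) k‖ = 1 := by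
  obtain ⟨ℓ', hℓ', j, rfl⟩ := exists_mem_Icc_add_mul hN ℓ
  have halias : (fun p => ce ((ℓ' + j * N : ℤ) * tg N p)) =
      ce (-(j * N / 2)) • fun p => ce (ℓ' * tg N p) :=
    funext (ce_mul_tg_add_mul hN.pos ℓ' j)
  rw [halias, mulVec_smul, Pi.smul_apply, smul_eq_mul, norm_mul, dirS_mulVec_ce_of_mem hN hℓ',
    norm_ce, norm_ce, one_mul]

theorem Matrix.mulVec_tsum {ι R n o : Type*} [Fintype n] [NonUnitalNonAssocSemiring R]
    [TopologicalSpace R] [IsTopologicalSemiring R] [T2Space R]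
    (A : Matrix o n R) (v : ι → n → R) (hv : ∀ p, Summable fun i => v i p) :
    (A *ᵥ fun p => ∑' i, v i p) = fun k => ∑' i, (A *ᵥ v i) k := by
  funext k
  simp only [mulVec, dotProduct, ← Summable.tsum_mul_left _ (hv _)]
  exact (Summable.tsum_finsetSum fun p _ => (hv p).mul_left (A k p)).symm

lemma lt_abs_iff_notMem_Icc_neg {n ℓ : ℤ} : n < |ℓ| ↔ ℓ ∉ Icc (-n) n := by
  rw [Finset.mem_Icc, ← abs_le, not_le]

variable {c : ℤ → ℂ}

lemma tailSum_nonneg : 0 ≤ tailSum N c :=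
  tsum_nonneg fun _ => by positivity

lemma hasSum_tailSum (hc : Summable fun ℓ : ℤ => ‖c ℓ‖) :
    HasSum (fun ℓ : ℤ => if Nt N < |ℓ| then ‖c ℓ‖ else 0) (tailSum N c) := by
  refine (Summable.of_nonneg_of_le (fun ℓ => by positivity) (fun ℓ => ?_) hc).hasSum
  split_ifs <;> simp

lemma norm_tsum_sub_sum_Icc_le_tailSum (hc : Summable fun ℓ : ℤ => ‖c ℓ‖) (a : ℤ → ℂ)
    (ha : ∀ ℓ, ‖a ℓ‖ ≤ 1) :
    ‖∑' ℓ, c ℓ * a ℓ - ∑ ℓ ∈ Icc (-Nt N) (Nt N), c ℓ * a ℓ‖ ≤ tailSum N c := by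
  have hca : Summable fun ℓ => c ℓ * a ℓ :=
    .of_norm_bounded hc fun ℓ => by
      rw [norm_mul]
      exact mul_le_of_le_one_right (norm_nonneg _) (ha ℓ)
  have hlow : ∑ ℓ ∈ Icc (-Nt N) (Nt N), c ℓ * a ℓ =
      ∑' ℓ, if Nt N < |ℓ| then 0 else c ℓ * a ℓ := by
    rw [tsum_eq_sum fun ℓ hℓ => if_pos (lt_abs_iff_notMem_Icc_neg.2 hℓ)]
    exact Finset.sum_congr rfl fun ℓ hℓ =>
      (if_neg fun h => lt_abs_iff_notMem_Icc_neg.1 h hℓ).symm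
  rw [hlow, ← hca.tsum_sub (summable_of_ne_finset_zero (s := Icc (-Nt N) (Nt N)) fun ℓ hℓ =>
    if_pos (lt_abs_iff_notMem_Icc_neg.2 hℓ))]
  refine tsum_of_norm_bounded (hasSum_tailSum hc) fun ℓ => ?_
  split_ifs
  · rw [sub_zero, norm_mul]
    exact mul_le_of_le_one_right (norm_nonneg _) (ha ℓ)
  · simp

noncomputable def lowPass (N : ℕ) (c : ℤ → ℂ) (x : ℝ) : ℂ :=
  ∑ ℓ ∈ Icc (-Nt N) (Nt N), c ℓ * ce (ℓ * x)

lemma norm_fcont_sub_lowPass_le (hc : Summable fun ℓ : ℤ => ‖c ℓ‖) (x : ℝ) :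
    ‖fcont c x - lowPass N c x‖ ≤ tailSum N c :=
  norm_tsum_sub_sum_Icc_le_tailSum hc _ fun _ => (norm_ce _).le

lemma dirS_mulVec_lowPass (hN : Odd N) :
    (dirS N m tt *ᵥ fun p => lowPass N c (tg N p)) = fun k => lowPass N c (tt k) := by
  have hsum : (fun p => lowPass N c (tg N p)) =
      ∑ ℓ ∈ Icc (-Nt N) (Nt N), c ℓ • fun p => ce (ℓ * tg N p) := by
    ext p
    simp [lowPass, Finset.sum_apply]
  funext k
  simp only [hsum, mulVec_sum, mulVec_smul, Finset.sum_apply, Pi.smul_apply, smul_eq_mul]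
  exact Finset.sum_congr rfl fun ℓ hℓ => by rw [dirS_mulVec_ce_of_mem hN hℓ]

lemma norm_dirS_mulVec_fcont_sub_lowPass_le (hN : Odd N) (hc : Summable fun ℓ : ℤ => ‖c ℓ‖)
    (k : Fin m) :
    ‖(dirS N m tt *ᵥ fun p => fcont c (tg N p)) k - lowPass N c (tt k)‖ ≤ tailSum N c := by
  have hsummable (x : ℝ) : Summable fun ℓ : ℤ => c ℓ * ce (ℓ * x) :=
    .of_norm_bounded hc fun ℓ => by rw [norm_mul, norm_ce, mul_one]
  have hlow : lowPass N c (tt k) =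
      ∑ ℓ ∈ Icc (-Nt N) (Nt N), c ℓ * (dirS N m tt *ᵥ fun p => ce (ℓ * tg N p)) k :=
    Finset.sum_congr rfl fun ℓ hℓ => by rw [dirS_mulVec_ce_of_mem hN hℓ]
  have hterm (ℓ : ℤ) : (dirS N m tt *ᵥ fun p => c ℓ * ce (ℓ * tg N p)) k =
      c ℓ * (dirS N m tt *ᵥ fun p => ce (ℓ * tg N p)) k :=
    congrFun (mulVec_smul _ (c ℓ) _) k
  simp only [fcont]
  rw [mulVec_tsum _ _ fun p => hsummable (tg N p), hlow]
  simp only [hterm]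
  exact norm_tsum_sub_sum_Icc_le_tailSum hc _ fun ℓ => (norm_dirS_mulVec_ce hN ℓ k).le

theorem norm_le_norm_add_of_forall_norm_le_norm_add_smul {𝕜 E : Type*} [RCLike 𝕜]
    [NormedAddCommGroup E] [InnerProductSpace 𝕜 E] {u r : E}
    (h : ∀ t : ℝ, ‖r‖ ≤ ‖r + (t : 𝕜) • u‖) : ‖u‖ ≤ ‖u + r‖ := by
  have hexpand (t : ℝ) : ‖r + (t : 𝕜) • u‖ ^ 2 =
      ‖r‖ ^ 2 + 2 * RCLike.re (inner 𝕜 r u) * t + ‖u‖ ^ 2 * (t * t) := by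
    rw [norm_add_sq (𝕜 := 𝕜), inner_smul_right, RCLike.re_ofReal_mul, norm_smul,
      RCLike.norm_ofReal, mul_pow, sq_abs]
    ring
  have hquad (t : ℝ) : 0 ≤ ‖u‖ ^ 2 * (t * t) + 2 * RCLike.re (inner 𝕜 r u) * t + 0 := by
    nlinarith [hexpand t, pow_le_pow_left₀ (norm_nonneg r) (h t) 2]
  -- a quadratic in `t` that vanishes at `t = 0` and is nonnegative has zero linear coefficient
  have horth : RCLike.re (inner 𝕜 r u) = 0 := by
    have := discrim_le_zero hquad
    rw [discrim] at this
    nlinarith [sq_nonneg (RCLike.re (inner 𝕜 r u))]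
  have hpyth : ‖u + r‖ ^ 2 = ‖u‖ ^ 2 + ‖r‖ ^ 2 := by
    rw [norm_add_sq (𝕜 := 𝕜), inner_re_symm, horth]
    ring
  nlinarith [norm_nonneg (u + r), norm_nonneg u, sq_nonneg ‖r‖]

lemma norm2_eq_norm_toLp {n : ℕ} (v : Fin n → ℂ) : norm2 v = ‖WithLp.toLp 2 v‖ := by
  rw [EuclideanSpace.norm_eq]
  rfl

lemma norm2_sub_le_add {n : ℕ} (u v w : Fin n → ℂ) :
    norm2 (u - w) ≤ norm2 (u - v) + norm2 (v - w) := by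
  simp only [norm2_eq_norm_toLp, WithLp.toLp_sub]
  exact norm_sub_le_norm_sub_add_norm_sub _ _ _

lemma norm2_sub_le {n : ℕ} (u v : Fin n → ℂ) : norm2 (u - v) ≤ norm2 u + norm2 v := by
  simp only [norm2_eq_norm_toLp, WithLp.toLp_sub]
  exact norm_sub_le _ _

lemma norm2_le_sqrt_card_mul {n : ℕ} {v : Fin n → ℂ} {C : ℝ} (hC : 0 ≤ C)
    (h : ∀ i, ‖v i‖ ≤ C) : norm2 v ≤ Real.sqrt n * C := by
  calc norm2 v ≤ Real.sqrt (∑ _i : Fin n, C ^ 2) :=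
        Real.sqrt_le_sqrt (Finset.sum_le_sum fun i _ => pow_le_pow_left₀ (norm_nonneg _) (h i) 2)
    _ = Real.sqrt n * C := by
        rw [Finset.sum_const, Finset.card_univ, Fintype.card_fin, nsmul_eq_mul,
          Real.sqrt_mul (Nat.cast_nonneg n), Real.sqrt_sq hC]

lemma norm2_mulVec_sub_le_of_isLeastSquares {n : ℕ} (S : Matrix (Fin m) (Fin n) ℂ)
    {b : Fin m → ℂ} {x : Fin n → ℂ} (hx : ∀ h, norm2 (S *ᵥ x - b) ≤ norm2 (S *ᵥ h - b))
    (y : Fin n → ℂ) : norm2 (S *ᵥ y - S *ᵥ x) ≤ norm2 (S *ᵥ y - b) := by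
  have hline (t : ℝ) : S *ᵥ (x + (t : ℂ) • (y - x)) - b =
      (S *ᵥ x - b) + (t : ℂ) • (S *ᵥ y - S *ᵥ x) := by
    rw [mulVec_add, mulVec_smul, mulVec_sub]
    abel
  have hsum : S *ᵥ y - b = (S *ᵥ y - S *ᵥ x) + (S *ᵥ x - b) := (sub_add_sub_cancel _ _ _).symm
  simp only [norm2_eq_norm_toLp] at hx ⊢
  rw [hsum, WithLp.toLp_add]
  refine norm_le_norm_add_of_forall_norm_le_norm_add_smul (𝕜 := ℂ) fun t => ?_
  have := hx (x + (t : ℂ) • (y - x))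
  rw [hline, WithLp.toLp_add, WithLp.toLp_smul] at this
  exact this

lemma norm2_dirS_mulVec_fcont_sub_lowPass_le (hN : Odd N) (hc : Summable fun ℓ : ℤ => ‖c ℓ‖) :
    norm2 ((dirS N m tt *ᵥ fun p => fcont c (tg N p)) - fun k => lowPass N c (tt k)) ≤
      Real.sqrt m * tailSum N c :=
  norm2_le_sqrt_card_mul tailSum_nonneg (norm_dirS_mulVec_fcont_sub_lowPass_le hN hc)

lemma norm2_lowPass_sub_fcont_add_le (hc : Summable fun ℓ : ℤ => ‖c ℓ‖) (d : Fin m → ℂ) :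
    norm2 ((fun k => lowPass N c (tt k)) - fun k => fcont c (tt k) + d k) ≤
      Real.sqrt m * tailSum N c + norm2 d := by
  have hsplit : ((fun k => lowPass N c (tt k)) - fun k => fcont c (tt k) + d k) =
      (fun k => lowPass N c (tt k) - fcont c (tt k)) - d := by
    ext k
    simp only [Pi.sub_apply]
    ring
  have hres := norm2_le_sqrt_card_mul tailSum_nonneg fun k =>
    (norm_sub_rev (lowPass N c (tt k)) _).trans_le (norm_fcont_sub_lowPass_le (N := N) hc (tt k))
  rw [hsplit]
  exact (norm2_sub_le _ d).trans (add_le_add_left hres _)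

end

theorem leastSquares_recovery_bound_general
    (N m : ℕ) (hN : Odd N)
    (c : ℤ → ℂ) (hc : Summable fun ℓ : ℤ => ‖c ℓ‖)
    (tt : Fin m → ℝ)
    (δ : ℝ) (hδ : 0 < δ)
    (hlb : ∀ v : Fin N → ℂ, norm2 v / δ ≤ norm2 ((dirS N m tt).mulVec v))
    (d : Fin m → ℂ)
    (fs : Fin N → ℂ)
    (hmin : ∀ h : Fin N → ℂ,
      norm2 (fun k => (dirS N m tt).mulVec fs k - (fcont c (tt k) + d k)) ≤
      norm2 (fun k => (dirS N m tt).mulVec h k - (fcont c (tt k) + d k))) :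
    norm2 (fun p => fcont c (tg N p) - fs p) ≤
      2 * δ * norm2 d + 2 * δ * Real.sqrt m * tailSum N c := by
  set S := dirS N m tt
  set f : Fin N → ℂ := fun p => fcont c (tg N p)
  set g : Fin N → ℂ := fun p => lowPass N c (tg N p)
  have hstable (v : Fin N → ℂ) : norm2 v ≤ δ * norm2 (S *ᵥ v) := (div_le_iff₀' hδ).1 (hlb v)
  have hSg : S *ᵥ g = fun k => lowPass N c (tt k) := dirS_mulVec_lowPass hN
  have hfg : norm2 (S *ᵥ (f - g)) ≤ Real.sqrt m * tailSum N c := by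
    rw [mulVec_sub, hSg]
    exact norm2_dirS_mulVec_fcont_sub_lowPass_le hN hc
  have hgfs : norm2 (S *ᵥ (g - fs)) ≤ Real.sqrt m * tailSum N c + norm2 d := by
    rw [mulVec_sub]
    refine (norm2_mulVec_sub_le_of_isLeastSquares S hmin g).trans ?_
    rw [hSg]
    exact norm2_lowPass_sub_fcont_add_le hc d
  have hd : 0 ≤ δ * norm2 d := mul_nonneg hδ.le (Real.sqrt_nonneg _)
  calc norm2 (f - fs) ≤ norm2 (f - g) + norm2 (g - fs) := norm2_sub_le_add f g fs
    _ ≤ δ * norm2 (S *ᵥ (f - g)) + δ * norm2 (S *ᵥ (g - fs)) :=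
        add_le_add (hstable _) (hstable _)
    _ ≤ δ * (Real.sqrt m * tailSum N c) + δ * (Real.sqrt m * tailSum N c + norm2 d) := by
        gcongr
    _ ≤ 2 * δ * norm2 d + 2 * δ * Real.sqrt m * tailSum N c := by
        linarith

/-- least-squares recovery bound. If `‖Sv‖₂ ≥ ‖v‖₂/δ` for all `v` and the
sample points lie in `Ω`, then any least-squares minimizer `f♯` of `‖Sh - b‖₂` satisfies
`‖f - f♯‖₂ ≤ 2δ‖d‖₂ + 2δ√m ∑_{|ℓ|>Ñ}|c_ℓ|`. -/
theorem leastSquares_recovery_bound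
    (N m : ℕ) (hN : Odd N) (hNpos : 0 < N) (hm : 0 < m)
    (c : ℤ → ℂ) (hc : Summable fun ℓ : ℤ => ‖c ℓ‖)
    (tt : Fin m → ℝ)
    (hΩ : ∀ k : Fin m, tt k ∈ Set.Ico (-(1/2) : ℝ) (1/2))
    (δ : ℝ) (hδ : 0 < δ)
    (hlb : ∀ v : Fin N → ℂ, norm2 v / δ ≤ norm2 ((dirS N m tt).mulVec v))
    (d : Fin m → ℂ)
    (fs : Fin N → ℂ)
    (hmin : ∀ h : Fin N → ℂ,
      norm2 (fun k => (dirS N m tt).mulVec fs k - (fcont c (tt k) + d k)) ≤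
      norm2 (fun k => (dirS N m tt).mulVec h k - (fcont c (tt k) + d k))) :
    norm2 (fun p => fcont c (tg N p) - fs p) ≤
      2 * δ * norm2 d + 2 * δ * Real.sqrt m * tailSum N c :=
  leastSquares_recovery_bound_general N m hN c hc tt δ hδ hlb d fs hmin
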